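/- arXiv:0707.0093 — 3 statements merged into one kernel-verified Lean document; each statement's English description precedes it below -/
import Mathlib

section
/- If there is a balanced stack composed of n blocks of length 1 and weight 1 that achieves an overhang of d, then there is a sequence of at most n−1 lossy moves that transforms a distribution μ with M_0[μ] = μ{x ≤ 0} = n and μ{x > 0} = 0 into a distribution μ' with μ'{x ≥ d−1} ≥ 1. -/
/-- The total mass of `μ` on a set `A` of positions. -/
noncomputable def mass (μ : ℝ →₀ ℝ) (A : Set ℝ) : ℝ :=
  ∑ x ∈ μ.support, Set.indicator A μ x

/-- The `j`-th moment of a finitely supported mass function. -/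
noncomputable def moment (j : ℕ) (μ : ℝ →₀ ℝ) : ℝ :=
  ∑ x ∈ μ.support, μ x * x ^ j

/-- The spread `S[μ] = Σ_{i<j} m_i m_j |x_i - x_j| = (1/2)·Σ_{x,y} μ(x) μ(y) |x - y|`. -/
noncomputable def spread (μ : ℝ →₀ ℝ) : ℝ :=
  (1 / 2) * ∑ x ∈ μ.support, ∑ y ∈ μ.support, μ x * μ y * |x - y|

/-- A distribution: finitely supported, nonnegative, not identically zero. -/
def IsDistribution (μ : ℝ →₀ ℝ) : Prop :=
  (∀ x, 0 ≤ μ x) ∧ μ ≠ 0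

/-- A move `([a, a+1], δ)`: a signed distribution `δ` supported in `[a, a+1]`
with vanishing total mass and first moment. -/
structure Move where
  a : ℝ
  δ : ℝ →₀ ℝ
  supp_subset : ∀ x, δ x ≠ 0 → a ≤ x ∧ x ≤ a + 1
  m0 : moment 0 δ = 0
  m1 : moment 1 δ = 0

/-- The center of a move. -/
noncomputable def Move.center (v : Move) : ℝ := v.a + 1 / 2

/-- `μ 0, μ 1, …, μ ℓ` is a sequence of distributions obtained by applying the
moves `v 0, …, v (ℓ-1)` in order (each move applicable, i.e. each result is a
distribution). -/
def IsMoveSeq (ℓ : ℕ) (v : ℕ → Move) (μ : ℕ → ℝ →₀ ℝ) : Prop :=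
  (∀ i ≤ ℓ, IsDistribution (μ i)) ∧ ∀ i < ℓ, μ (i + 1) = μ i + (v i).δ

/-- `μ_max(A) = max_{0 ≤ i ≤ ℓ} μ_i(A)`. -/
noncomputable def muMax (ℓ : ℕ) (μ : ℕ → ℝ →₀ ℝ) (A : Set ℝ) : ℝ :=
  (Finset.range (ℓ + 1)).sup' (Finset.nonempty_range_iff.mpr (Nat.succ_ne_zero ℓ))
    (fun i => mass (μ i) A)

open scoped Classical in
/-- The number of moves among `v 0, …, v (ℓ-1)` whose center lies in `(a, ∞)`. -/
noncomputable def movesBeyond (ℓ : ℕ) (v : ℕ → Move) (a : ℝ) : ℕ :=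
  ((Finset.range ℓ).filter (fun i => a < (v i).center)).card

/-- A sequence of moves is weight-constrained (w.r.t. the generated sequence of
distributions) if for every `a` the number of moves centered in `(a, ∞)` is at
most `μ_max{x > a}`. -/
def WeightConstrained (ℓ : ℕ) (v : ℕ → Move) (μ : ℕ → ℝ →₀ ℝ) : Prop :=
  ∀ a : ℝ, (movesBeyond ℓ v a : ℝ) ≤ muMax ℓ μ {x | a < x}

/-- `μ'` is a basic split of `μ`: one point mass `(x, μ x)` of `μ` is replaced by
finitely many point masses of positive mass with total mass `μ x` and center of
mass at `x`, the remaining point masses being unchanged. -/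
def BasicSplit (μ μ' : ℝ →₀ ℝ) : Prop :=
  ∃ (x : ℝ) (ν : ℝ →₀ ℝ), 0 < μ x ∧ (∀ y, 0 ≤ ν y) ∧
    moment 0 ν = μ x ∧ moment 1 ν = μ x * x ∧ μ' = μ.erase x + ν

/-- `μ ⪯ μ'` : `μ'` is obtained from `μ` by finitely many basic splits. -/
def Splits (μ μ' : ℝ →₀ ℝ) : Prop := Relation.ReflTransGen BasicSplit μ μ'

/-- `ν` is the result of the extreme move on `[a, b]` applied to `μ`: `ν` agrees
with `μ` outside `[a, b]`, vanishes on `(a, b)`, and has the same total mass and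
first moment as `μ` (so all mass in `[a, b]` is moved to the endpoints). -/
def IsExtremeMoveOn (a b : ℝ) (μ ν : ℝ →₀ ℝ) : Prop :=
  (∀ x, x ∉ Set.Icc a b → ν x = μ x) ∧
  (∀ x, x ∈ Set.Ioo a b → ν x = 0) ∧
  moment 0 ν = moment 0 μ ∧ moment 1 ν = moment 1 μ

/-- The block `[xc, xc+1] × [yc, yc+h]`. -/
def blockRegion (h xc yc : ℝ) : Set (ℝ × ℝ) :=
  Set.Icc xc (xc + 1) ×ˢ Set.Icc yc (yc + h)

/-- The interior of the block `[xc, xc+1] × [yc, yc+h]`. -/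
def blockInterior (h xc yc : ℝ) : Set (ℝ × ℝ) :=
  Set.Ioo xc (xc + 1) ×ˢ Set.Ioo yc (yc + h)

/-- The table `B₀ = (−∞,0] × (−∞,0]`. -/
def tableRegion : Set (ℝ × ℝ) := Set.Iic 0 ×ˢ Set.Iic 0

/-- A stack of `n` blocks of height `h > 0` with lower-left corners `(x i, y i)`:
the interiors of the blocks are pairwise disjoint. -/
def IsStack (n : ℕ) (h : ℝ) (x y : Fin n → ℝ) : Prop :=
  0 < h ∧ Pairwise fun i j : Fin n =>
    Disjoint (blockInterior h (x i) (y i)) (blockInterior h (x j) (y j))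

/-- Block `i` rests on block `j`: they intersect and `y i = y j + h`. -/
def RestsOnBlock (n : ℕ) (h : ℝ) (x y : Fin n → ℝ) (i j : Fin n) : Prop :=
  (blockRegion h (x i) (y i) ∩ blockRegion h (x j) (y j)).Nonempty ∧ y i = y j + h

/-- Block `i` rests on the table: it intersects the table region. -/
def RestsOnTable (n : ℕ) (h : ℝ) (x y : Fin n → ℝ) (i : Fin n) : Prop :=
  (blockRegion h (x i) (y i) ∩ tableRegion).Nonempty

/-- A stack is balanced if there is a collection of finitely many nonnegative
upward forces acting between each block and the blocks (or table) it rests on,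
applied at points of the corresponding contact intervals (with equal downward
reactions), under which every block is in equilibrium (zero net force and zero
net moment).  Here `f j i` records the upward forces, as a finitely supported
function from positions (x-coordinates) to magnitudes, applied to block `i` by
`j` (where `j = none` is the table and `j = some j'` is block `j'`). -/
def IsBalanced (n : ℕ) (h : ℝ) (x y : Fin n → ℝ) : Prop :=
  ∃ f : Option (Fin n) → Fin n → (ℝ →₀ ℝ),
    (∀ j i t, 0 ≤ f j i t) ∧
    (∀ i j : Fin n, ¬ RestsOnBlock n h x y i j → f (some j) i = 0) ∧
    (∀ i : Fin n, ¬ RestsOnTable n h x y i → f none i = 0) ∧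
    (∀ i j : Fin n, ∀ t, f (some j) i t ≠ 0 →
        max (x i) (x j) ≤ t ∧ t ≤ min (x i + 1) (x j + 1)) ∧
    (∀ i : Fin n, ∀ t, f none i t ≠ 0 → x i ≤ t ∧ t ≤ min (x i + 1) 0) ∧
    (∀ i : Fin n,
      (∑ j : Option (Fin n), moment 0 (f j i)) = 1 + ∑ k : Fin n, moment 0 (f (some i) k) ∧
      (∑ j : Option (Fin n), moment 1 (f j i)) = (x i + 1 / 2) + ∑ k : Fin n, moment 1 (f (some i) k))

/-!
Take the blocks lying strictly below a block `B` that reaches the overhang off the stack one at a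
time, from the bottom up, and follow the forces that the table and the removed blocks exert on the
blocks still present. Removing a block `b` trades the forces acting on `b` for the forces `b`
exerts on the blocks above it; by the equilibrium of `b`, these together with its unit weight at
its centre have the same total mass and first moment as the forces acting on `b`, so the step is a
lossy move on `[x_b, x_b + 1]`. Initially the distribution is the reaction of the table: mass `n`,
all at `x ≤ 0`. At the end it contains the forces supporting `B`, of total mass at least `1` and
located in `[d - 1, d]`. Fewer than `n` blocks are removed, since `B` is not.
-/

open Finset

section Moments

noncomputable def momentAddHom (j : ℕ) : (ℝ →₀ ℝ) →+ ℝ :=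
  Finsupp.liftAddHom fun a => AddMonoidHom.mulRight (a ^ j)

lemma moment_add (j : ℕ) (μ ν : ℝ →₀ ℝ) : moment j (μ + ν) = moment j μ + moment j ν :=
  map_add (momentAddHom j) μ ν

lemma moment_sub (j : ℕ) (μ ν : ℝ →₀ ℝ) : moment j (μ - ν) = moment j μ - moment j ν :=
  map_sub (momentAddHom j) μ ν

lemma moment_sum (j : ℕ) {ι : Type*} (s : Finset ι) (μ : ι → ℝ →₀ ℝ) :
    moment j (∑ i ∈ s, μ i) = ∑ i ∈ s, moment j (μ i) :=
  map_sum (momentAddHom j) μ s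

lemma moment_single (j : ℕ) (c a : ℝ) : moment j (Finsupp.single c a) = a * c ^ j :=
  Finsupp.liftAddHom_apply_single (fun a : ℝ => AddMonoidHom.mulRight (a ^ j)) c a

lemma moment_zero_nonneg {μ : ℝ →₀ ℝ} (hμ : ∀ t, 0 ≤ μ t) : 0 ≤ moment 0 μ :=
  Finset.sum_nonneg fun t _ => by simpa using hμ t

lemma isDistribution_of_moment_zero_pos {μ : ℝ →₀ ℝ} (hμ : ∀ t, 0 ≤ μ t)
    (hpos : 0 < moment 0 μ) : IsDistribution μ := by
  refine ⟨hμ, fun h0 => ?_⟩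
  simp [h0, moment] at hpos

lemma moment_zero_eq_sub_of_lossyMoves {ℓ : ℕ} {v : ℕ → Move} {μ : ℕ → ℝ →₀ ℝ}
    (hstep : ∀ i < ℓ, μ (i + 1) = μ i + (v i).δ - Finsupp.single (v i).center 1) :
    ∀ m ≤ ℓ, moment 0 (μ m) = moment 0 (μ 0) - m := by
  intro m hm
  induction m with
  | zero => simp
  | succ m ih =>
    rw [hstep m hm, moment_sub, moment_add, (v m).m0, moment_single, ih (by omega)]
    push_cast
    ring

end Moments

section Mass

lemma mass_eq_sum_of_support_subset (μ : ℝ →₀ ℝ) (A : Set ℝ) {s : Finset ℝ}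
    (hs : μ.support ⊆ s) : mass μ A = ∑ t ∈ s, A.indicator μ t :=
  Finset.sum_subset hs fun t _ ht => by simp [Finsupp.notMem_support_iff.mp ht]

lemma mass_mono {μ ν : ℝ →₀ ℝ} (hμν : ∀ t, μ t ≤ ν t) (A : Set ℝ) : mass μ A ≤ mass ν A := by
  classical
  rw [mass_eq_sum_of_support_subset μ A Finset.subset_union_left,
    mass_eq_sum_of_support_subset ν A Finset.subset_union_right]
  exact Finset.sum_le_sum fun t _ => Set.indicator_le_indicator (hμν t)

lemma mass_eq_moment_zero {μ : ℝ →₀ ℝ} {A : Set ℝ} (hA : ↑μ.support ⊆ A) :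
    mass μ A = moment 0 μ :=
  Finset.sum_congr rfl fun _ ht => by simp [Set.indicator_of_mem (hA ht)]

lemma mass_eq_zero_of_disjoint {μ : ℝ →₀ ℝ} {A : Set ℝ} (hA : Disjoint ↑μ.support A) :
    mass μ A = 0 :=
  Finset.sum_eq_zero fun _ ht =>
    Set.indicator_of_notMem (Set.disjoint_left.mp hA (Finset.mem_coe.mpr ht)) _

lemma coe_support_sum_subset {ι : Type*} {s : Finset ι} {μ : ι → ℝ →₀ ℝ} {A : Set ℝ}
    (hμ : ∀ i ∈ s, ↑(μ i).support ⊆ A) : ↑(∑ i ∈ s, μ i).support ⊆ A := by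
  classical
  refine (Finset.coe_subset.mpr Finsupp.support_finsetSum).trans ?_
  simpa using hμ

end Mass

lemma List.exists_perm_pairwise_apply_le {ι : Type*} (y : ι → ℝ) (l : List ι) :
    ∃ L : List ι, L.Perm l ∧ L.Pairwise (fun i j => y i ≤ y j) := by
  refine ⟨l.mergeSort fun i j => decide (y i ≤ y j), List.mergeSort_perm _ _, ?_⟩
  simpa using List.pairwise_mergeSort (le := fun i j => decide (y i ≤ y j))
    (fun a b c hab hbc => by simp only [decide_eq_true_eq] at *; exact hab.trans hbc)
    (fun a b => by simpa using le_total (y a) (y b)) l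

namespace ForceNetwork

variable {ι : Type*} [Fintype ι] (f : Option ι → ι → ℝ →₀ ℝ) {x : ι → ℝ}

noncomputable def forceOn (i : ι) : ℝ →₀ ℝ := f none i + ∑ j, f (some j) i

noncomputable def forceBy (j : ι) : ℝ →₀ ℝ := ∑ i, f (some j) i

/-- Once the blocks of `P` are taken off, the distribution is made of the forces that the table
and the blocks of `P` exert on the remaining blocks. -/
noncomputable def crossingForce [DecidableEq ι] (P : Finset ι) : ℝ →₀ ℝ :=
  ∑ i ∈ Pᶜ, f none i + ∑ j ∈ P, ∑ i ∈ Pᶜ, f (some j) i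

lemma moment_forceOn (p : ℕ) (i : ι) :
    moment p (forceOn f i) = ∑ j : Option ι, moment p (f j i) := by
  simp only [forceOn, moment_add, moment_sum, Fintype.sum_option]

lemma moment_forceBy (p : ℕ) (j : ι) :
    moment p (forceBy f j) = ∑ i, moment p (f (some j) i) :=
  moment_sum p _ _

lemma sum_forceOn : ∑ i, forceOn f i = ∑ i, f none i + ∑ j, forceBy f j := by
  simp only [forceOn, forceBy, Finset.sum_add_distrib]
  rw [Finset.sum_comm]

lemma moment_zero_sum_table
    (hforce : ∀ i, moment 0 (forceOn f i) = 1 + moment 0 (forceBy f i)) :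
    moment 0 (∑ i, f none i) = Fintype.card ι := by
  have h := congrArg (moment 0) (sum_forceOn f)
  simp only [moment_add, moment_sum, hforce, Finset.sum_add_distrib] at h
  simp only [moment_sum, Finset.sum_const, Finset.card_univ, nsmul_eq_mul, mul_one] at h ⊢
  linarith

lemma support_forceBy_subset
    (hblock_supp : ∀ i j t, f (some j) i t ≠ 0 →
      max (x i) (x j) ≤ t ∧ t ≤ min (x i + 1) (x j + 1))
    (j : ι) : ↑(forceBy f j).support ⊆ Set.Icc (x j) (x j + 1) :=
  coe_support_sum_subset fun i _ t ht =>
    have h := hblock_supp i j t (Finsupp.mem_support_iff.mp ht)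
    ⟨(le_max_right _ _).trans h.1, h.2.trans (min_le_right _ _)⟩

lemma support_forceOn_subset
    (hblock_supp : ∀ i j t, f (some j) i t ≠ 0 →
      max (x i) (x j) ≤ t ∧ t ≤ min (x i + 1) (x j + 1))
    (htable_supp : ∀ i t, f none i t ≠ 0 → x i ≤ t ∧ t ≤ min (x i + 1) 0)
    (i : ι) : ↑(forceOn f i).support ⊆ Set.Icc (x i) (x i + 1) := by
  classical
  refine (Finset.coe_subset.mpr Finsupp.support_add).trans ?_
  rw [Finset.coe_union]
  refine Set.union_subset (fun t ht => ?_) (coe_support_sum_subset fun j _ t ht => ?_)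
  · have h := htable_supp i t (Finsupp.mem_support_iff.mp ht)
    exact ⟨h.1, h.2.trans (min_le_left _ _)⟩
  · have h := hblock_supp i j t (Finsupp.mem_support_iff.mp ht)
    exact ⟨(le_max_left _ _).trans h.1, h.2.trans (min_le_left _ _)⟩

lemma support_sum_table_subset
    (htable_supp : ∀ i t, f none i t ≠ 0 → x i ≤ t ∧ t ≤ min (x i + 1) 0) :
    ((∑ i, f none i).support : Set ℝ) ⊆ Set.Iic 0 :=
  coe_support_sum_subset fun i _ t ht =>
    (htable_supp i t (Finsupp.mem_support_iff.mp ht)).2.trans (min_le_right _ _)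

/-- The move of taking block `i` off: its equilibrium equations say that the forces it exerts
plus its unit weight at the centre have the mass and first moment of the forces acting on it. -/
lemma exists_blockMove
    (hblock_supp : ∀ i j t, f (some j) i t ≠ 0 →
      max (x i) (x j) ≤ t ∧ t ≤ min (x i + 1) (x j + 1))
    (htable_supp : ∀ i t, f none i t ≠ 0 → x i ≤ t ∧ t ≤ min (x i + 1) 0)
    (hforce : ∀ i, moment 0 (forceOn f i) = 1 + moment 0 (forceBy f i))
    (htorque : ∀ i, moment 1 (forceOn f i) = x i + 1 / 2 + moment 1 (forceBy f i)) (i : ι) :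
    ∃ v : Move, v.center = x i + 1 / 2 ∧
      v.δ = forceBy f i + Finsupp.single (x i + 1 / 2) 1 - forceOn f i := by
  classical
  have hsupp : ↑(forceBy f i + Finsupp.single (x i + 1 / 2) 1 - forceOn f i).support ⊆
      Set.Icc (x i) (x i + 1) := by
    refine (Finset.coe_subset.mpr (Finsupp.support_sub.trans
      (Finset.union_subset_union_left Finsupp.support_add))).trans ?_
    simp only [Finset.coe_union]
    refine Set.union_subset (Set.union_subset (support_forceBy_subset f hblock_supp i) ?_)
      (support_forceOn_subset f hblock_supp htable_supp i)
    refine (Finset.coe_subset.mpr Finsupp.support_single_subset).trans ?_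
    simp only [Finset.coe_singleton, Set.singleton_subset_iff, Set.mem_Icc]
    constructor <;> linarith
  refine ⟨⟨x i, _, fun t ht => hsupp (Finsupp.mem_support_iff.mpr ht), ?_, ?_⟩, rfl, rfl⟩
  · simp only [moment_sub, moment_add, moment_single, hforce]
    ring
  · simp only [moment_sub, moment_add, moment_single, htorque]
    ring

section Removal

variable [DecidableEq ι]

@[simp]
lemma crossingForce_empty : crossingForce f ∅ = ∑ i, f none i := by
  simp [crossingForce]

lemma crossingForce_nonneg (hnonneg : ∀ j i t, 0 ≤ f j i t) (P : Finset ι) (t : ℝ) :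
    0 ≤ crossingForce f P t := by
  simp only [crossingForce, Finsupp.add_apply, Finsupp.finsetSum_apply]
  exact add_nonneg (Finset.sum_nonneg fun i _ => hnonneg _ i t)
    (Finset.sum_nonneg fun j _ => Finset.sum_nonneg fun i _ => hnonneg _ i t)

lemma crossingForce_insert {P : Finset ι} {b : ι} (hb : b ∉ P)
    (hnot_above : ∀ i ∈ insert b P, f (some b) i = 0) (hbelow : ∀ j ∉ P, f (some j) b = 0) :
    crossingForce f (insert b P) + forceOn f b = crossingForce f P + forceBy f b := by
  set Q := (insert b P)ᶜ
  have hbQ : b ∉ Q := by simp [Q]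
  have hPc : Pᶜ = insert b Q := by ext i; by_cases i = b <;> simp_all [Q]
  have hon : ∑ j, f (some j) b = ∑ j ∈ P, f (some j) b :=
    (Finset.sum_subset (Finset.subset_univ P) fun j _ hj => hbelow j hj).symm
  have hby : forceBy f b = ∑ i ∈ Q, f (some b) i :=
    (Finset.sum_subset (Finset.subset_univ Q) fun i _ hi =>
      hnot_above i (by rwa [Finset.mem_compl, not_not] at hi)).symm
  simp only [crossingForce, forceOn, hPc, hon, hby, Finset.sum_insert hb, Finset.sum_insert hbQ,
    Finset.sum_add_distrib]
  abel

lemma crossingForce_take_succ {y : ι → ℝ} (hup : ∀ i j, f (some j) i ≠ 0 → y j < y i)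
    {L : List ι} (hnodup : L.Nodup) (hsorted : L.Pairwise (fun i j => y i ≤ y j))
    (hclosed : ∀ i ∈ L, ∀ j, f (some j) i ≠ 0 → j ∈ L) {m : ℕ} (hm : m < L.length) :
    crossingForce f (L.take (m + 1)).toFinset + forceOn f L[m] =
      crossingForce f (L.take m).toFinset + forceBy f L[m] := by
  have hsplit : L = L.take m ++ L[m] :: L.drop (m + 1) := by
    rw [← List.drop_eq_getElem_cons hm, List.take_append_drop]
  have hsorted' := hsorted
  have hnodup' := hnodup
  rw [hsplit, List.pairwise_append, List.pairwise_cons] at hsorted'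
  rw [hsplit, List.nodup_append, List.nodup_cons] at hnodup'
  have hbelow : ∀ a ∈ L.take m, y a ≤ y L[m] := fun a ha =>
    hsorted'.2.2 a ha _ List.mem_cons_self
  have habove : ∀ c ∈ L.drop (m + 1), y L[m] ≤ y c := hsorted'.2.1.1
  have hnew : L[m] ∉ L.take m := fun h => hnodup'.2.2 _ h _ List.mem_cons_self rfl
  have htake : (L.take (m + 1)).toFinset = insert L[m] (L.take m).toFinset := by
    rw [List.take_add_one, List.getElem?_eq_getElem hm, Option.toList_some, List.toFinset_append,
      Finset.union_comm]
    rfl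
  rw [htake]
  refine crossingForce_insert f (by simpa using hnew) (fun i hi => ?_) (fun j hj => ?_)
  · by_contra hne
    have hlt := hup i _ hne
    rcases Finset.mem_insert.mp hi with rfl | hi
    · exact lt_irrefl _ hlt
    · exact (hbelow i (List.mem_toFinset.mp hi)).not_gt hlt
  · by_contra hne
    have hlt := hup _ j hne
    have hjL := hclosed _ (List.getElem_mem hm) j hne
    rw [hsplit, List.mem_append, List.mem_cons] at hjL
    rcases hjL with hj' | rfl | hj'
    · exact hj (List.mem_toFinset.mpr hj')
    · exact lt_irrefl _ hlt
    · exact (habove j hj').not_gt hlt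

lemma forceOn_le_crossingForce (hnonneg : ∀ j i t, 0 ≤ f j i t) {P : Finset ι} {k : ι}
    (hk : k ∉ P) (hsupp : ∀ j, f (some j) k ≠ 0 → j ∈ P) (t : ℝ) :
    forceOn f k t ≤ crossingForce f P t := by
  have hkP : k ∈ Pᶜ := Finset.mem_compl.mpr hk
  have hon : ∑ j, f (some j) k t = ∑ j ∈ P, f (some j) k t := by
    refine (Finset.sum_subset (Finset.subset_univ P) fun j _ hj => ?_).symm
    simp [not_imp_comm.mp (hsupp j) hj]
  simp only [forceOn, crossingForce, Finsupp.add_apply, Finsupp.finsetSum_apply, hon]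
  gcongr with j
  · exact Finset.single_le_sum (fun i _ => hnonneg none i t) hkP
  · exact Finset.single_le_sum (fun i _ => hnonneg (some j) i t) hkP

lemma one_le_mass_crossingForce (hnonneg : ∀ j i t, 0 ≤ f j i t)
    (hblock_supp : ∀ i j t, f (some j) i t ≠ 0 →
      max (x i) (x j) ≤ t ∧ t ≤ min (x i + 1) (x j + 1))
    (htable_supp : ∀ i t, f none i t ≠ 0 → x i ≤ t ∧ t ≤ min (x i + 1) 0)
    (hforce : ∀ i, moment 0 (forceOn f i) = 1 + moment 0 (forceBy f i))
    {P : Finset ι} {k : ι} (hk : k ∉ P) (hsupp : ∀ j, f (some j) k ≠ 0 → j ∈ P) :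
    1 ≤ mass (crossingForce f P) {t | x k ≤ t} :=
  calc 1 ≤ 1 + moment 0 (forceBy f k) :=
        le_add_of_nonneg_right (moment_zero_nonneg fun t => by
          simpa only [forceBy, Finsupp.finsetSum_apply] using
            Finset.sum_nonneg fun i _ => hnonneg _ i t)
    _ = mass (forceOn f k) {t | x k ≤ t} := by
        rw [← hforce]
        exact (mass_eq_moment_zero fun t ht =>
          (support_forceOn_subset f hblock_supp htable_supp k ht).1).symm
    _ ≤ mass (crossingForce f P) {t | x k ≤ t} :=
        mass_mono (forceOn_le_crossingForce f hnonneg hk hsupp) _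

end Removal

lemma exists_lossyMoves (hnonneg : ∀ j i t, 0 ≤ f j i t)
    (hblock_supp : ∀ i j t, f (some j) i t ≠ 0 →
      max (x i) (x j) ≤ t ∧ t ≤ min (x i + 1) (x j + 1))
    (htable_supp : ∀ i t, f none i t ≠ 0 → x i ≤ t ∧ t ≤ min (x i + 1) 0)
    (hforce : ∀ i, moment 0 (forceOn f i) = 1 + moment 0 (forceBy f i))
    (htorque : ∀ i, moment 1 (forceOn f i) = x i + 1 / 2 + moment 1 (forceBy f i))
    {y : ι → ℝ} (hup : ∀ i j, f (some j) i ≠ 0 → y j < y i) (k : ι) :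
    ∃ (ℓ : ℕ) (v : ℕ → Move) (μ : ℕ → ℝ →₀ ℝ), ℓ < Fintype.card ι ∧
      (∀ i < ℓ, μ (i + 1) = μ i + (v i).δ - Finsupp.single (v i).center 1) ∧
      μ 0 = ∑ i, f none i ∧ (∀ m t, 0 ≤ μ m t) ∧ 1 ≤ mass (μ ℓ) {t | x k ≤ t} := by
  classical
  choose w hw_center hw_δ using exists_blockMove f hblock_supp htable_supp hforce htorque
  obtain ⟨L, hperm, hsorted⟩ :=
    List.exists_perm_pairwise_apply_le y (univ.filter fun i => y i < y k).toList
  have hmem : ∀ i, i ∈ L ↔ y i < y k := by simp [hperm.mem_iff]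
  refine ⟨L.length, fun m => w (L.getD m k), fun m => crossingForce f (L.take m).toFinset,
    ?_, fun m hm => ?_, by simp, fun m => crossingForce_nonneg f hnonneg _, ?_⟩
  · rw [hperm.length_eq, Finset.length_toList]
    exact Finset.card_lt_univ_of_notMem (x := k) (by simp)
  · dsimp only
    rw [L.getD_eq_getElem k hm, hw_center, hw_δ, eq_sub_iff_add_eq.mpr (crossingForce_take_succ f
      hup (hperm.nodup_iff.mpr (Finset.nodup_toList _)) hsorted
      (fun i hi j hj => (hmem j).2 ((hup i j hj).trans ((hmem i).1 hi))) hm)]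
    abel
  · simpa [hmem] using one_le_mass_crossingForce f hnonneg hblock_supp htable_supp hforce
      (P := (L.take L.length).toFinset) (k := k) (by simp [hmem]) (by simpa [hmem] using hup k)

end ForceNetwork

open ForceNetwork

/-- **Lemma (from overhang to lossy mass movement).** If there is a balanced
stack of `n` unit-length unit-weight blocks achieving an overhang of `d`, then
some sequence of at most `n − 1` lossy moves transforms a distribution `μ` with
`M₀[μ] = μ{x ≤ 0} = n` and `μ{x > 0} = 0` into a distribution `μ'` with
`μ'{x ≥ d − 1} ≥ 1`. -/
theorem overhang_to_lossy_moves (n : ℕ) (h : ℝ) (x y : Fin n → ℝ) (d : ℝ)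
    (hstack : IsStack n h x y) (hbal : IsBalanced n h x y)
    (hover : ∃ k : Fin n, x k + 1 = d) :
    ∃ (ℓ : ℕ) (v : ℕ → Move) (μ : ℕ → ℝ →₀ ℝ),
      ℓ ≤ n - 1 ∧
      (∀ i ≤ ℓ, IsDistribution (μ i)) ∧
      (∀ i < ℓ, μ (i + 1) = μ i + (v i).δ - Finsupp.single (v i).center 1) ∧
      moment 0 (μ 0) = (n : ℝ) ∧ mass (μ 0) {t | t ≤ 0} = (n : ℝ) ∧
      mass (μ 0) {t | 0 < t} = 0 ∧
      1 ≤ mass (μ ℓ) {t | d - 1 ≤ t} := by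
  obtain ⟨k, rfl⟩ := hover
  obtain ⟨f, hnonneg, hrest, -, hblock_supp, htable_supp, hbalance⟩ := hbal
  have hup : ∀ i j, f (some j) i ≠ 0 → y j < y i := fun i j hji => by
    linarith [(not_imp_comm.mp (hrest i j) hji).2, hstack.1]
  have hforce : ∀ i, moment 0 (forceOn f i) = 1 + moment 0 (forceBy f i) := fun i => by
    simpa only [moment_forceOn, moment_forceBy] using (hbalance i).1
  have htorque : ∀ i, moment 1 (forceOn f i) = x i + 1 / 2 + moment 1 (forceBy f i) := fun i => by
    simpa only [moment_forceOn, moment_forceBy] using (hbalance i).2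
  obtain ⟨ℓ, v, μ, hℓ, hstep, hμ0, hμ_nonneg, hfinal⟩ :=
    exists_lossyMoves f hnonneg hblock_supp htable_supp hforce htorque hup k
  rw [Fintype.card_fin] at hℓ
  have hmass : ∀ m ≤ ℓ, moment 0 (μ m) = n - m := fun m hm => by
    rw [moment_zero_eq_sub_of_lossyMoves hstep m hm, hμ0, moment_zero_sum_table f hforce,
      Fintype.card_fin]
  have hmass0 : moment 0 (μ 0) = n := by simpa using hmass 0 (Nat.zero_le _)
  have hsupp0 : ((μ 0).support : Set ℝ) ⊆ Set.Iic 0 := hμ0 ▸ support_sum_table_subset f htable_supp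
  refine ⟨ℓ, v, μ, by omega, fun m hm => isDistribution_of_moment_zero_pos (hμ_nonneg m) ?_,
    hstep, hmass0, (mass_eq_moment_zero hsupp0).trans hmass0, ?_, by simpa using hfinal⟩
  · have : (m : ℝ) < n := by exact_mod_cast hm.trans_lt hℓ
    linarith [hmass m hm]
  · exact mass_eq_zero_of_disjoint
      (Set.disjoint_left.mpr fun t ht ht' => not_lt.mpr (hsupp0 ht) (show 0 < t from ht'))
end

section
/- For any discrete distribution μ, the spread and moments satisfy S[μ]² ≤ (1/3)·M_2[μ]·M_0[μ]³. -/
open Finset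

section WeightedPoints

variable {α : Type*} [Field α] [LinearOrder α] [IsStrictOrderedRing α]

def netMassBelow (s : Finset α) (w : α → α) (x : α) : α :=
  ∑ y ∈ s, w y * SignType.sign (x - y)

theorem sum_sum_mul_abs_sub_eq (s : Finset α) (w : α → α) :
    ∑ x ∈ s, ∑ y ∈ s, w x * w y * |x - y| = 2 * ∑ x ∈ s, w x * x * netMassBelow s w x := by
  set T := ∑ x ∈ s, ∑ y ∈ s, w x * w y * x * SignType.sign (x - y)
  have hswap : ∑ x ∈ s, ∑ y ∈ s, w x * w y * y * SignType.sign (x - y) = -T := by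
    rw [sum_comm, ← sum_neg_distrib]
    refine sum_congr rfl fun x _ => ?_
    rw [← sum_neg_distrib]
    refine sum_congr rfl fun y _ => ?_
    rw [← neg_sub x y, Left.sign_neg, SignType.coe_neg]
    ring
  calc ∑ x ∈ s, ∑ y ∈ s, w x * w y * |x - y|
      = T - ∑ x ∈ s, ∑ y ∈ s, w x * w y * y * SignType.sign (x - y) := by
        rw [← sum_sub_distrib]
        refine sum_congr rfl fun x _ => ?_
        rw [← sum_sub_distrib]
        refine sum_congr rfl fun y _ => ?_
        rw [← sign_mul_self (x - y)]
        ring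
    _ = 2 * ∑ x ∈ s, w x * x * netMassBelow s w x := by
        rw [hswap, sub_neg_eq_add, ← two_mul]
        congr 1
        refine sum_congr rfl fun x _ => ?_
        rw [netMassBelow, mul_sum]
        exact sum_congr rfl fun y _ => by ring

/-- The midpoint rule underestimates the integral of the convex `s ^ 2 / 2` over `[u, u + 2m]`. -/
theorem mul_sq_add_le_cube_sub_cube {m : α} (hm : 0 ≤ m) (u : α) :
    m * (u + m) ^ 2 ≤ ((u + 2 * m) ^ 3 - u ^ 3) / 6 := by
  nlinarith [mul_nonneg hm (mul_nonneg hm hm)]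

theorem netMassBelow_insert_of_lt {s : Finset α} {a x : α} (ha : ∀ y ∈ s, y < a) (hx : x < a)
    (w : α → α) : netMassBelow (insert a s) w x = netMassBelow s w x - w a := by
  have has : a ∉ s := fun h => lt_irrefl a (ha a h)
  rw [netMassBelow, netMassBelow, sum_insert has, sign_neg (sub_neg.2 hx), SignType.coe_neg,
    SignType.coe_one]
  ring

theorem netMassBelow_insert_self {s : Finset α} {a : α} (ha : ∀ y ∈ s, y < a) (w : α → α) :
    netMassBelow (insert a s) w a = ∑ y ∈ s, w y := by
  have has : a ∉ s := fun h => lt_irrefl a (ha a h)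
  rw [netMassBelow, sum_insert has, sub_self, sign_zero, SignType.coe_zero, mul_zero, zero_add]
  exact sum_congr rfl fun y hy => by rw [sign_pos (sub_pos.2 (ha y hy)), SignType.coe_one, mul_one]

theorem sum_mul_sq_netMassBelow_add_le {s : Finset α} {w : α → α} (hw : ∀ x ∈ s, 0 ≤ w x)
    (c : α) :
    ∑ x ∈ s, w x * (netMassBelow s w x + c) ^ 2
      ≤ ((∑ x ∈ s, w x + c) ^ 3 - (c - ∑ x ∈ s, w x) ^ 3) / 6 := by
  induction s using Finset.induction_on_max generalizing c with
  | empty => simp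
  | insert a s ha ih =>
    have has : a ∉ s := fun h => lt_irrefl a (ha a h)
    have hwa : 0 ≤ w a := hw a (mem_insert_self a s)
    have hrest := ih (fun x hx => hw x (mem_insert_of_mem hx)) (c - w a)
    have hbelow : ∀ x ∈ s, w x * (netMassBelow (insert a s) w x + c) ^ 2
        = w x * (netMassBelow s w x + (c - w a)) ^ 2 :=
      fun x hx => by rw [netMassBelow_insert_of_lt ha (ha x hx)]; ring
    have hnew := mul_sq_add_le_cube_sub_cube hwa (∑ x ∈ s, w x + c - w a)
    rw [sum_insert has, sum_insert has, netMassBelow_insert_self ha, sum_congr rfl hbelow]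
    linear_combination hnew + hrest

theorem sum_mul_sq_netMassBelow_le {s : Finset α} {w : α → α} (hw : ∀ x ∈ s, 0 ≤ w x) :
    ∑ x ∈ s, w x * netMassBelow s w x ^ 2 ≤ (∑ x ∈ s, w x) ^ 3 / 3 := by
  have h := sum_mul_sq_netMassBelow_add_le hw 0
  simp only [add_zero, zero_sub] at h
  linarith

end WeightedPoints

theorem moment_zero (μ : ℝ →₀ ℝ) : moment 0 μ = ∑ x ∈ μ.support, μ x := by
  simp only [moment, pow_zero, mul_one]

theorem spread_eq_sum_mul_netMassBelow (μ : ℝ →₀ ℝ) :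
    spread μ = ∑ x ∈ μ.support, μ x * x * netMassBelow μ.support μ x := by
  rw [spread, sum_sum_mul_abs_sub_eq]
  ring

/-- **Lemma (spread vs. second moment).** For any discrete distribution `μ`,
`S[μ]² ≤ (1/3) M₂[μ] M₀[μ]³`. -/
theorem spread_sq_le (μ : ℝ →₀ ℝ) (hμ : IsDistribution μ) :
    spread μ ^ 2 ≤ (1 / 3) * moment 2 μ * moment 0 μ ^ 3 := by
  set t := netMassBelow μ.support μ
  have hμ_nonneg : ∀ x ∈ μ.support, 0 ≤ μ x := fun x _ => hμ.1 x
  have hcs : (∑ x ∈ μ.support, μ x * x * t x) ^ 2 ≤ moment 2 μ * ∑ x ∈ μ.support, μ x * t x ^ 2 :=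
    sum_sq_le_sum_mul_sum_of_sq_le_mul _ (fun x hx => mul_nonneg (hμ_nonneg x hx) (sq_nonneg x))
      (fun x hx => mul_nonneg (hμ_nonneg x hx) (sq_nonneg (t x))) fun x _ => le_of_eq (by ring)
  have hmass : ∑ x ∈ μ.support, μ x * t x ^ 2 ≤ moment 0 μ ^ 3 / 3 := by
    rw [moment_zero]
    exact sum_mul_sq_netMassBelow_le hμ_nonneg
  have hm2 : 0 ≤ moment 2 μ := sum_nonneg fun x hx => mul_nonneg (hμ_nonneg x hx) (sq_nonneg x)
  calc spread μ ^ 2 ≤ moment 2 μ * ∑ x ∈ μ.support, μ x * t x ^ 2 := by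
        rwa [spread_eq_sum_mul_netMassBelow]
    _ ≤ moment 2 μ * (moment 0 μ ^ 3 / 3) := mul_le_mul_of_nonneg_left hmass hm2
    _ = 1 / 3 * moment 2 μ * moment 0 μ ^ 3 := by ring
end

section
/- Any sequence of moves that transforms the distribution μ = {(0,1)} (a single point mass of size 1 at the origin) into a distribution ν with ν{|x| ≥ d} ≥ p, where d > 0 and 0 < p < 1, must contain at least (3p)^(3/2)·d³ moves. -/
/-!
Replace each move by the extreme move on the same interval `[a, a + 1]`, which sends all the mass
there to the two endpoints, keeping mass and centre of mass. Since the chord of a convex function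
over `[a, a + 1]` is affine there and convex everywhere, the resulting distributions `σᵢ` dominate
the `μᵢ` in the convex order, so `M₂[μ_ℓ] ≤ M₂[σ_ℓ]`.

An extreme move that raises the second moment by `Δ` raises the spread by at least `3 Δ²`: the
gain in spread is the Gram form of the Brownian bridge kernel `min (x, y) - x y` on the moved mass,
and Cauchy–Schwarz in `L²[0, 1]` against `1 - 2 t` gives the bound. By induction
`M₂[σᵢ]² ≤ i S[σᵢ] / 3`.

For a probability distribution `σ`, `S = Σ σ(x) x g(x)` with `g(x) = Σ_y σ(y) sign (x - y)`, and
`Σ σ g² ≤ 1 / 3` because the three cyclic relabellings of this triple sum add up to a sum of terms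
at most `1`; by Cauchy–Schwarz `S² ≤ M₂ / 3`. Hence `27 M₂[σ_ℓ]³ ≤ ℓ²`, while `M₂[μ_ℓ] ≥ p d²`
by Chebyshev.
-/

open Finset Set intervalIntegral
open MeasureTheory (volume)

noncomputable def pairing (μ : ℝ →₀ ℝ) (f : ℝ → ℝ) : ℝ := μ.sum fun x m => m * f x

variable {f g : ℝ → ℝ} {μ ν σ : ℝ →₀ ℝ} {a : ℝ}

lemma moment_eq_pairing (j : ℕ) (μ : ℝ →₀ ℝ) : moment j μ = pairing μ (· ^ j) := rfl

lemma pairing_add_left (μ ν : ℝ →₀ ℝ) (f : ℝ → ℝ) :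
    pairing (μ + ν) f = pairing μ f + pairing ν f :=
  Finsupp.sum_add_index' (fun _ => zero_mul _) fun _ _ _ => add_mul _ _ _

lemma pairing_sub_left (μ ν : ℝ →₀ ℝ) (f : ℝ → ℝ) :
    pairing (μ - ν) f = pairing μ f - pairing ν f :=
  Finsupp.sum_sub_index fun _ _ _ => sub_mul _ _ _

lemma pairing_single (x r : ℝ) (f : ℝ → ℝ) : pairing (Finsupp.single x r) f = r * f x :=
  Finsupp.sum_single_index (zero_mul _)

lemma pairing_add_right (μ : ℝ →₀ ℝ) (f g : ℝ → ℝ) :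
    pairing μ (fun x => f x + g x) = pairing μ f + pairing μ g := by
  simp only [pairing, Finsupp.sum, mul_add, Finset.sum_add_distrib]

lemma pairing_sub_right (μ : ℝ →₀ ℝ) (f g : ℝ → ℝ) :
    pairing μ (fun x => f x - g x) = pairing μ f - pairing μ g := by
  simp only [pairing, Finsupp.sum, mul_sub, Finset.sum_sub_distrib]

lemma mul_pairing (c : ℝ) (μ : ℝ →₀ ℝ) (f : ℝ → ℝ) :
    c * pairing μ f = pairing μ fun x => c * f x := by
  simp only [pairing, Finsupp.sum, Finset.mul_sum]
  exact Finset.sum_congr rfl fun _ _ => by ring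

lemma pairing_mul_const (μ : ℝ →₀ ℝ) (f : ℝ → ℝ) (c : ℝ) :
    pairing μ f * c = pairing μ fun x => f x * c := by
  simp only [pairing, Finsupp.sum, Finset.sum_mul, mul_assoc]

lemma pairing_const (μ : ℝ →₀ ℝ) (c : ℝ) : pairing μ (fun _ => c) = moment 0 μ * c := by
  simp only [pairing, moment, Finsupp.sum, pow_zero, mul_one, Finset.sum_mul]

lemma pairing_affine (μ : ℝ →₀ ℝ) (c e : ℝ) :
    pairing μ (fun x => c * x + e) = c * moment 1 μ + e * moment 0 μ := by
  simp only [pairing, moment, Finsupp.sum, Finset.mul_sum, ← Finset.sum_add_distrib]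
  exact Finset.sum_congr rfl fun x _ => by ring

lemma pairing_congr (h : ∀ x ∈ μ.support, f x = g x) : pairing μ f = pairing μ g :=
  Finset.sum_congr rfl fun x hx => by simp only [h x hx]

lemma pairing_mono (hμ : ∀ x, 0 ≤ μ x) (hfg : ∀ x, f x ≤ g x) : pairing μ f ≤ pairing μ g :=
  Finset.sum_le_sum fun x _ => mul_le_mul_of_nonneg_left (hfg x) (hμ x)

lemma pairing_nonneg (hμ : ∀ x, 0 ≤ μ x) (hf : ∀ x ∈ μ.support, 0 ≤ f x) : 0 ≤ pairing μ f :=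
  Finset.sum_nonneg fun x hx => mul_nonneg (hμ x) (hf x hx)

lemma pairing_comm (μ ν : ℝ →₀ ℝ) (F : ℝ → ℝ → ℝ) :
    (pairing μ fun x => pairing ν fun y => F x y) =
      pairing ν fun y => pairing μ fun x => F x y := by
  simp only [pairing, Finsupp.sum, Finset.mul_sum]
  rw [Finset.sum_comm]
  exact Finset.sum_congr rfl fun _ _ => Finset.sum_congr rfl fun _ _ => by ring

lemma sq_pairing_mul_le (hμ : ∀ x, 0 ≤ μ x) (f g : ℝ → ℝ) :
    pairing μ (fun x => f x * g x) ^ 2 ≤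
      pairing μ (fun x => f x ^ 2) * pairing μ (fun x => g x ^ 2) :=
  Finset.sum_sq_le_sum_mul_sum_of_sq_le_mul _ (fun x _ => mul_nonneg (hμ x) (sq_nonneg _))
    (fun x _ => mul_nonneg (hμ x) (sq_nonneg _)) fun x _ => le_of_eq (by ring)

lemma mass_mul_sq_le_moment_two (hμ : ∀ x, 0 ≤ μ x) {d : ℝ} (hd : 0 ≤ d) :
    mass μ {t | d ≤ |t|} * d ^ 2 ≤ moment 2 μ := by
  rw [mass, moment, Finset.sum_mul]
  refine Finset.sum_le_sum fun x _ => ?_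
  by_cases hx : d ≤ |x|
  · rw [indicator_of_mem (show x ∈ {t : ℝ | d ≤ |t|} from hx), ← sq_abs x]
    exact mul_le_mul_of_nonneg_left (pow_le_pow_left₀ hd hx 2) (hμ x)
  · rw [indicator_of_notMem (show x ∉ {t : ℝ | d ≤ |t|} from hx), zero_mul]
    exact mul_nonneg (hμ x) (sq_nonneg x)

lemma spread_eq_pairing (μ : ℝ →₀ ℝ) :
    spread μ = pairing μ (fun x => pairing μ fun y => |x - y|) / 2 := by
  simp only [spread, pairing, Finsupp.sum, Finset.mul_sum, Finset.sum_div]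
  exact Finset.sum_congr rfl fun _ _ => Finset.sum_congr rfl fun _ _ => by ring

lemma spread_nonneg (hμ : ∀ x, 0 ≤ μ x) : 0 ≤ spread μ := by
  rw [spread_eq_pairing]
  exact div_nonneg (pairing_nonneg hμ fun x _ => pairing_nonneg hμ fun y _ => abs_nonneg _)
    zero_le_two

noncomputable def crossSpread (μ ν : ℝ →₀ ℝ) : ℝ := pairing μ fun x => pairing ν fun y => |x - y|

lemma spread_add (μ ν : ℝ →₀ ℝ) :
    spread (μ + ν) = spread μ + crossSpread μ ν + spread ν := by
  have hcomm : (pairing ν fun x => pairing μ fun y => |x - y|) = crossSpread μ ν := by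
    rw [pairing_comm]
    exact pairing_congr fun _ _ => pairing_congr fun _ _ => abs_sub_comm _ _
  simp only [spread_eq_pairing, pairing_add_left, pairing_add_right, hcomm]
  rw [crossSpread]
  ring

lemma crossSpread_add_right (μ ν ν' : ℝ →₀ ℝ) :
    crossSpread μ (ν + ν') = crossSpread μ ν + crossSpread μ ν' := by
  simp only [crossSpread, pairing_add_left, pairing_add_right]

lemma spread_single (x r : ℝ) : spread (Finsupp.single x r) = 0 := by
  simp [spread_eq_pairing, pairing_single]

lemma crossSpread_single_single (x y r s : ℝ) :
    crossSpread (Finsupp.single x r) (Finsupp.single y s) = r * (s * |x - y|) := by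
  simp only [crossSpread, pairing_single]

namespace Move

lemma mem_Icc_of_mem_support (w : Move) {x : ℝ} (hx : x ∈ w.δ.support) :
    x ∈ Icc w.a (w.a + 1) :=
  w.supp_subset x (Finsupp.mem_support_iff.mp hx)

lemma pairing_eq_zero_of_affine (w : Move) (c e : ℝ)
    (hf : ∀ x ∈ Icc w.a (w.a + 1), f x = c * x + e) : pairing w.δ f = 0 := by
  rw [pairing_congr fun x hx => hf x (w.mem_Icc_of_mem_support hx), pairing_affine, w.m0, w.m1]
  ring

lemma crossSpread_eq_zero (w : Move) (hμ : ∀ x ∈ μ.support, x ∉ Icc w.a (w.a + 1)) :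
    crossSpread μ w.δ = 0 := by
  rw [crossSpread, pairing_congr fun x hx => ?_, pairing_const, mul_zero]
  rcases lt_or_ge x w.a with h | h
  · refine w.pairing_eq_zero_of_affine 1 (-x) fun y hy => ?_
    rw [abs_of_neg (by linarith [hy.1])]
    ring
  · have h' : w.a + 1 < x := not_le.1 fun h' => hμ x hx ⟨h, h'⟩
    refine w.pairing_eq_zero_of_affine (-1) x fun y hy => ?_
    rw [abs_of_pos (by linarith [hy.2])]
    ring

end Move

lemma intervalIntegrable_pairing {F : ℝ → ℝ → ℝ} {b c : ℝ}
    (hF : ∀ x, IntervalIntegrable (F x) volume b c) :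
    IntervalIntegrable (fun t => pairing ν fun x => F x t) volume b c := by
  have h := IntervalIntegrable.sum ν.support fun x _ => (hF x).const_mul (ν x)
  simp only [Finset.sum_fn] at h
  exact h

lemma integral_pairing {F : ℝ → ℝ → ℝ} {b c : ℝ}
    (hF : ∀ x, IntervalIntegrable (F x) volume b c) :
    ∫ t in b..c, pairing ν (fun x => F x t) = pairing ν fun x => ∫ t in b..c, F x t := by
  simp only [pairing, Finsupp.sum]
  rw [integral_finsetSum fun x _ => (hF x).const_mul _]
  simp only [integral_const_mul]

lemma intervalIntegrable_indicator_one_le (m : ℝ) {b c : ℝ} :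
    IntervalIntegrable ({t | t ≤ m}.indicator (1 : ℝ → ℝ)) volume b c :=
  ⟨intervalIntegrable_const.1.indicator measurableSet_Iic,
    intervalIntegrable_const.2.indicator measurableSet_Iic⟩

lemma integral_indicator_one_le {m : ℝ} (hm : m ∈ Icc (0 : ℝ) 1) :
    ∫ t in (0 : ℝ)..1, {t | t ≤ m}.indicator (1 : ℝ → ℝ) t = m := by
  rw [integral_indicator hm]
  simp

lemma integral_indicator_one_le_mul_one_sub_two_mul {m : ℝ} (hm : m ∈ Icc (0 : ℝ) 1) :
    ∫ t in (0 : ℝ)..1, {t | t ≤ m}.indicator (1 : ℝ → ℝ) t * (1 - 2 * t) = m * (1 - m) := by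
  have h : ∀ t, {t | t ≤ m}.indicator (1 : ℝ → ℝ) t * (1 - 2 * t) =
      {t | t ≤ m}.indicator (fun t => 1 - 2 * t) t := fun t => by
    simp only [indicator_apply]
    split_ifs <;> simp
  simp only [h]
  rw [integral_indicator hm, integral_sub, integral_const_mul, integral_id, integral_const]
  · simp only [sub_zero, smul_eq_mul, mul_one]
    ring
  all_goals exact Continuous.intervalIntegrable (by fun_prop) _ _

lemma integral_sq_add_mul_one_sub_two_mul (z c : ℝ) :
    ∫ t in (0 : ℝ)..1, (z + c * (1 - 2 * t)) ^ 2 = z ^ 2 + c ^ 2 / 3 := by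
  have h : ∀ t : ℝ, (z + c * (1 - 2 * t)) ^ 2 =
      (z + c) ^ 2 - 4 * c * (z + c) * t + 4 * c ^ 2 * t ^ 2 := fun t => by ring
  simp only [h]
  rw [integral_add, integral_sub, integral_const_mul, integral_const_mul, integral_pow, integral_id,
    integral_const]
  · norm_num
    ring
  all_goals exact Continuous.intervalIntegrable (by fun_prop) _ _

-- `tailMass ν a t = ν [a + t, ∞)`
noncomputable def tailMass (ν : ℝ →₀ ℝ) (a t : ℝ) : ℝ :=
  pairing ν fun x => {s | s ≤ x - a}.indicator 1 t

lemma tailMass_sq (ν : ℝ →₀ ℝ) (a t : ℝ) : tailMass ν a t ^ 2 =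
    pairing ν fun x => pairing ν fun y => {s | s ≤ min (x - a) (y - a)}.indicator 1 t := by
  rw [tailMass, sq, pairing_mul_const]
  refine pairing_congr fun x _ => ?_
  rw [mul_pairing]
  refine pairing_congr fun y _ => ?_
  simp only [indicator_apply, mem_ofPred_eq, le_min_iff, Pi.one_apply]
  split_ifs <;> simp_all

lemma sub_mem_Icc_of_mem_support (hν : ∀ x ∈ ν.support, x ∈ Icc a (a + 1)) {x : ℝ}
    (hx : x ∈ ν.support) : x - a ∈ Icc (0 : ℝ) 1 :=
  ⟨sub_nonneg.2 (hν x hx).1, by linarith [(hν x hx).2]⟩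

lemma integral_tailMass (hν : ∀ x ∈ ν.support, x ∈ Icc a (a + 1)) :
    ∫ t in (0 : ℝ)..1, tailMass ν a t = pairing ν fun x => x - a := by
  unfold tailMass
  rw [integral_pairing fun x => intervalIntegrable_indicator_one_le _]
  exact pairing_congr fun x hx => integral_indicator_one_le (sub_mem_Icc_of_mem_support hν hx)

lemma integral_tailMass_mul_one_sub_two_mul (hν : ∀ x ∈ ν.support, x ∈ Icc a (a + 1)) :
    ∫ t in (0 : ℝ)..1, tailMass ν a t * (1 - 2 * t) = pairing ν fun x => (x - a) * (a + 1 - x) := by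
  simp only [tailMass, pairing_mul_const]
  rw [integral_pairing fun x => (intervalIntegrable_indicator_one_le _).mul_continuousOn
    (by fun_prop)]
  refine pairing_congr fun x hx => ?_
  rw [integral_indicator_one_le_mul_one_sub_two_mul (sub_mem_Icc_of_mem_support hν hx)]
  ring

lemma integral_tailMass_sq (hν : ∀ x ∈ ν.support, x ∈ Icc a (a + 1)) :
    ∫ t in (0 : ℝ)..1, tailMass ν a t ^ 2 =
      pairing ν fun x => pairing ν fun y => min (x - a) (y - a) := by
  simp only [tailMass_sq]
  rw [integral_pairing fun x => intervalIntegrable_pairing fun y =>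
    intervalIntegrable_indicator_one_le _]
  refine pairing_congr fun x hx => ?_
  rw [integral_pairing fun y => intervalIntegrable_indicator_one_le _]
  refine pairing_congr fun y hy => integral_indicator_one_le ?_
  rcases min_choice (x - a) (y - a) with h | h <;> rw [h]
  exacts [sub_mem_Icc_of_mem_support hν hx, sub_mem_Icc_of_mem_support hν hy]

lemma pairing_pairing_min_sub (ν : ℝ →₀ ℝ) (a : ℝ) :
    (pairing ν fun x => pairing ν fun y => min (x - a) (y - a)) =
      moment 0 ν * pairing ν (fun x => x - a) - spread ν := by
  have h : ∀ x y : ℝ, min (x - a) (y - a) = (x - a) / 2 + ((y - a) / 2 - |x - y| / 2) :=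
    fun x y => by
      rcases le_total x y with h | h
      · rw [min_eq_left (by linarith), abs_of_nonpos (by linarith)]; ring
      · rw [min_eq_right (by linarith), abs_of_nonneg (by linarith)]; ring
  simp only [h, pairing_add_right, pairing_sub_right, pairing_const, ← pairing_mul_const,
    div_eq_mul_inv, spread_eq_pairing]
  rw [← mul_pairing, ← pairing_mul_const]
  simp only [pairing_sub_right, pairing_const]
  ring

lemma spread_add_three_mul_sq_le (hν : ∀ x ∈ ν.support, x ∈ Icc a (a + 1)) :
    spread ν + 3 * pairing ν (fun x => (x - a) * (a + 1 - x)) ^ 2 ≤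
      pairing ν (fun x => a + 1 - x) * pairing ν (fun x => x - a) := by
  set U := tailMass ν a
  set z := pairing ν fun x => x - a
  set Δ := pairing ν fun x => (x - a) * (a + 1 - x)
  have hU : IntervalIntegrable U volume 0 1 :=
    intervalIntegrable_pairing fun x => intervalIntegrable_indicator_one_le _
  have hUφ : IntervalIntegrable (fun t => U t * (1 - 2 * t)) volume 0 1 := by
    simp only [U, tailMass, pairing_mul_const]
    exact intervalIntegrable_pairing fun x =>
      (intervalIntegrable_indicator_one_le _).mul_continuousOn (by fun_prop)
  have hUU : IntervalIntegrable (fun t => U t ^ 2) volume 0 1 := by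
    simp only [U, tailMass_sq]
    exact intervalIntegrable_pairing fun x => intervalIntegrable_pairing fun y =>
      intervalIntegrable_indicator_one_le _
  -- Cauchy–Schwarz for `U` and `1 - 2 t` in `L²[0, 1]`, where `∫ U² - z²` is the right side minus
  -- the spread and `∫ U (1 - 2 t) = Δ`.
  have hG : 0 ≤ ∫ t in (0 : ℝ)..1, (U t - (z + 3 * Δ * (1 - 2 * t))) ^ 2 :=
    integral_nonneg zero_le_one fun t _ => sq_nonneg _
  have hexp : ∀ t, (U t - (z + 3 * Δ * (1 - 2 * t))) ^ 2 =
      U t ^ 2 - 2 * z * U t - 6 * Δ * (U t * (1 - 2 * t)) + (z + 3 * Δ * (1 - 2 * t)) ^ 2 :=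
    fun t => by ring
  simp only [hexp] at hG
  rw [integral_add, integral_sub, integral_sub, integral_const_mul, integral_const_mul,
    integral_tailMass_sq hν, pairing_pairing_min_sub, integral_tailMass hν,
    integral_tailMass_mul_one_sub_two_mul hν, integral_sq_add_mul_one_sub_two_mul] at hG
  · rw [pairing_congr fun x _ => (by ring : a + 1 - x = 1 - (x - a)), pairing_sub_right,
      pairing_const, mul_one]
    linarith
  exacts [hUU, hU.const_mul _, hUU.sub (hU.const_mul _), hUφ.const_mul _,
    (hUU.sub (hU.const_mul _)).sub (hUφ.const_mul _),
    Continuous.intervalIntegrable (by fun_prop) _ _]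

lemma sign_mul_sign_cyclic_le_one (x y z : ℝ) :
    Real.sign (x - y) * Real.sign (x - z) + Real.sign (y - z) * Real.sign (y - x) +
      Real.sign (z - x) * Real.sign (z - y) ≤ 1 := by
  rcases lt_trichotomy x y with h₁ | h₁ | h₁ <;> rcases lt_trichotomy y z with h₂ | h₂ | h₂ <;>
    rcases lt_trichotomy x z with h₃ | h₃ | h₃ <;>
    simp [Real.sign_of_pos, Real.sign_of_neg, sub_pos, sub_neg, h₁, h₂, h₃] <;>
    linarith

lemma abs_sub_eq_mul_sign_add_mul_sign (x y : ℝ) :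
    |x - y| = x * Real.sign (x - y) + y * Real.sign (y - x) := by
  rcases lt_trichotomy x y with h | rfl | h
  · rw [Real.sign_of_neg (sub_neg.2 h), Real.sign_of_pos (sub_pos.2 h), abs_of_neg (sub_neg.2 h)]
    ring
  · simp
  · rw [Real.sign_of_pos (sub_pos.2 h), Real.sign_of_neg (sub_neg.2 h), abs_of_pos (sub_pos.2 h)]
    ring

lemma spread_eq_pairing_mul_sign (μ : ℝ →₀ ℝ) :
    spread μ = pairing μ fun x => x * pairing μ fun y => Real.sign (x - y) := by
  simp only [spread_eq_pairing, abs_sub_eq_mul_sign_add_mul_sign, pairing_add_right, mul_pairing]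
  rw [pairing_comm μ μ fun x y => y * Real.sign (y - x)]
  ring

lemma pairing_sq_pairing_sign_le (hμ : ∀ x, 0 ≤ μ x) :
    (pairing μ fun x => (pairing μ fun y => Real.sign (x - y)) ^ 2) ≤ moment 0 μ ^ 3 / 3 := by
  set T := pairing μ fun x => pairing μ fun y => pairing μ fun z =>
    Real.sign (x - y) * Real.sign (x - z)
  have hT : (pairing μ fun x => (pairing μ fun y => Real.sign (x - y)) ^ 2) = T := by
    simp only [sq, pairing_mul_const, mul_pairing, T]
    exact pairing_congr fun x _ => pairing_congr fun y _ => pairing_congr fun z _ => mul_comm _ _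
  have hrotate : ∀ F : ℝ → ℝ → ℝ → ℝ,
      (pairing μ fun x => pairing μ fun y => pairing μ fun z => F y z x) =
        pairing μ fun x => pairing μ fun y => pairing μ fun z => F x y z := fun F => by
    rw [pairing_comm]
    exact pairing_congr fun y _ => pairing_comm μ μ _
  have h2 : (pairing μ fun x => pairing μ fun y => pairing μ fun z =>
      Real.sign (y - z) * Real.sign (y - x)) = T :=
    hrotate fun x y z => Real.sign (x - y) * Real.sign (x - z)
  have h3 : (pairing μ fun x => pairing μ fun y => pairing μ fun z =>
      Real.sign (z - x) * Real.sign (z - y)) = T :=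
    (hrotate fun x y z => Real.sign (y - z) * Real.sign (y - x)).trans h2
  have hle : 3 * T ≤ moment 0 μ ^ 3 := calc
    3 * T = pairing μ fun x => pairing μ fun y => pairing μ fun z =>
        Real.sign (x - y) * Real.sign (x - z) + Real.sign (y - z) * Real.sign (y - x) +
          Real.sign (z - x) * Real.sign (z - y) := by
      simp only [pairing_add_right, h2, h3]
      ring
    _ ≤ pairing μ fun x => pairing μ fun y => pairing μ fun z => (1 : ℝ) :=
      pairing_mono hμ fun x => pairing_mono hμ fun y => pairing_mono hμ fun z =>
        sign_mul_sign_cyclic_le_one x y z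
    _ = moment 0 μ ^ 3 := by
      simp only [pairing_const]
      ring
  rw [hT]
  linarith

lemma sq_spread_le (hμ : ∀ x, 0 ≤ μ x) : spread μ ^ 2 ≤ moment 0 μ ^ 3 * moment 2 μ / 3 := calc
  spread μ ^ 2 ≤ moment 2 μ * pairing μ fun x => (pairing μ fun y => Real.sign (x - y)) ^ 2 := by
    rw [spread_eq_pairing_mul_sign]
    exact sq_pairing_mul_le hμ _ _
  _ ≤ moment 2 μ * (moment 0 μ ^ 3 / 3) :=
    mul_le_mul_of_nonneg_left (pairing_sq_pairing_sign_le hμ)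
      (pairing_nonneg hμ fun x _ => sq_nonneg x)
  _ = moment 0 μ ^ 3 * moment 2 μ / 3 := by ring

-- For convex `f`, the secant of `f` over `[a, a + 1]` on that interval and `f` outside it.
noncomputable def chord (f : ℝ → ℝ) (a : ℝ) (x : ℝ) : ℝ :=
  max (f x) (f a + (f (a + 1) - f a) * (x - a))

lemma le_chord (f : ℝ → ℝ) (a x : ℝ) : f x ≤ chord f a x := le_max_left _ _

namespace ConvexOn

lemma convexOn_chord (hf : ConvexOn ℝ univ f) (a : ℝ) : ConvexOn ℝ univ (chord f a) := by
  refine hf.sup ⟨convex_univ, fun x _ y _ p q _ _ hpq => le_of_eq ?_⟩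
  simp only [smul_eq_mul]
  linear_combination (-(f a - (f (a + 1) - f a) * a)) * hpq

lemma chord_eq_of_mem_Icc (hf : ConvexOn ℝ univ f) {x : ℝ} (hx : x ∈ Icc a (a + 1)) :
    chord f a x = f a + (f (a + 1) - f a) * (x - a) := by
  refine max_eq_right ?_
  have key := hf.2 (mem_univ a) (mem_univ (a + 1)) (sub_nonneg.2 hx.2) (sub_nonneg.2 hx.1)
    (by ring : a + 1 - x + (x - a) = 1)
  simp only [smul_eq_mul] at key
  rw [show (a + 1 - x) * a + (x - a) * (a + 1) = x by ring] at key
  linarith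

lemma chord_eq_of_notMem_Ioo (hf : ConvexOn ℝ univ f) {x : ℝ} (hx : x ∉ Ioo a (a + 1)) :
    chord f a x = f x := by
  refine max_eq_left ?_
  rcases lt_trichotomy x a with hxa | rfl | hxa
  · have := hf.slope_mono_adjacent (mem_univ x) (mem_univ (a + 1)) hxa (lt_add_one a)
    rw [div_le_iff₀ (sub_pos.2 hxa), add_sub_cancel_left, div_one] at this
    nlinarith
  · simp
  · rcases (not_lt.1 fun h => hx ⟨hxa, h⟩ : a + 1 ≤ x).eq_or_lt with rfl | hx1
    · simp
    have := hf.slope_mono_adjacent (mem_univ a) (mem_univ x) (lt_add_one a) hx1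
    rw [le_div_iff₀ (sub_pos.2 hx1), add_sub_cancel_left, div_one] at this
    nlinarith

end ConvexOn

def ConvexOrderLE (μ ν : ℝ →₀ ℝ) : Prop :=
  ∀ f : ℝ → ℝ, ConvexOn ℝ univ f → pairing μ f ≤ pairing ν f

section ExtremeMove

variable (σ a)

noncomputable def innerPart : ℝ →₀ ℝ := σ.filter (· ∈ Icc a (a + 1))

noncomputable def outerPart : ℝ →₀ ℝ := σ.filter (· ∉ Icc a (a + 1))

noncomputable def endpointMasses : ℝ →₀ ℝ :=
  Finsupp.single a (pairing (innerPart σ a) fun x => a + 1 - x) +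
    Finsupp.single (a + 1) (pairing (innerPart σ a) fun x => x - a)

noncomputable def extremeDelta : ℝ →₀ ℝ := endpointMasses σ a - innerPart σ a

lemma mem_Icc_of_mem_support_innerPart {x : ℝ} (hx : x ∈ (innerPart σ a).support) :
    x ∈ Icc a (a + 1) := by
  rw [innerPart, Finsupp.support_filter, Finset.mem_filter] at hx
  exact hx.2

lemma pairing_extremeDelta (f : ℝ → ℝ) :
    pairing (extremeDelta σ a) f =
      pairing (innerPart σ a) fun x => (a + 1 - x) * f a + (x - a) * f (a + 1) - f x := by
  rw [extremeDelta, endpointMasses, pairing_sub_left, pairing_add_left, pairing_single,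
    pairing_single, pairing_mul_const, pairing_mul_const, ← pairing_add_right, ← pairing_sub_right]

noncomputable def extremeMove : Move where
  a := a
  δ := extremeDelta σ a
  supp_subset x hx := by
    by_contra hI
    refine hx ?_
    have ha : x ≠ a := fun h => hI (h ▸ ⟨le_rfl, by linarith⟩)
    have hb : x ≠ a + 1 := fun h => hI (h ▸ ⟨by linarith, le_rfl⟩)
    simp [extremeDelta, endpointMasses, innerPart, hI, ha.symm, hb.symm]
  m0 := by
    rw [moment_eq_pairing, pairing_extremeDelta, pairing_congr fun x _ => (by ring :
      (a + 1 - x) * a ^ 0 + (x - a) * (a + 1) ^ 0 - x ^ 0 = 0), pairing_const, mul_zero]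
  m1 := by
    rw [moment_eq_pairing, pairing_extremeDelta, pairing_congr fun x _ => (by ring :
      (a + 1 - x) * a ^ 1 + (x - a) * (a + 1) ^ 1 - x ^ 1 = 0), pairing_const, mul_zero]

lemma moment_zero_extremeDelta : moment 0 (extremeDelta σ a) = 0 := (extremeMove σ a).m0

lemma add_extremeDelta : σ + extremeDelta σ a = outerPart σ a + endpointMasses σ a := by
  rw [extremeDelta, innerPart, outerPart]
  nth_rewrite 1 [← Finsupp.filter_add_filter_not σ (· ∈ Icc a (a + 1))]
  abel

lemma notMem_Icc_of_mem_support_outerPart {x : ℝ} (hx : x ∈ (outerPart σ a).support) :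
    x ∉ Icc a (a + 1) := by
  rw [outerPart, Finsupp.support_filter, Finset.mem_filter] at hx
  exact hx.2

lemma add_extremeDelta_nonneg (hσ : ∀ x, 0 ≤ σ x) (x : ℝ) : 0 ≤ (σ + extremeDelta σ a) x := by
  have hI : ∀ x, 0 ≤ innerPart σ a x := fun x => by
    rw [innerPart, Finsupp.filter_apply]
    split_ifs <;> simp [hσ x]
  have hO : 0 ≤ outerPart σ a x := by
    rw [outerPart, Finsupp.filter_apply]
    split_ifs <;> simp [hσ x]
  have hza : 0 ≤ pairing (innerPart σ a) fun x => a + 1 - x := pairing_nonneg hI fun x hx => by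
    linarith [(mem_Icc_of_mem_support_innerPart σ a hx).2]
  have hzb : 0 ≤ pairing (innerPart σ a) fun x => x - a := pairing_nonneg hI fun x hx => by
    linarith [(mem_Icc_of_mem_support_innerPart σ a hx).1]
  rw [add_extremeDelta, Finsupp.add_apply, endpointMasses, Finsupp.add_apply,
    Finsupp.single_apply, Finsupp.single_apply]
  split_ifs <;> positivity

lemma add_extremeDelta_apply_of_mem_Ioo {x : ℝ} (hx : x ∈ Ioo a (a + 1)) :
    (σ + extremeDelta σ a) x = 0 := by
  rw [add_extremeDelta, Finsupp.add_apply, outerPart, Finsupp.filter_apply,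
    if_neg (not_not.2 (Ioo_subset_Icc_self hx))]
  simp [endpointMasses, hx.1.ne, hx.2.ne']

lemma moment_two_add_extremeDelta : moment 2 (σ + extremeDelta σ a) =
    moment 2 σ + pairing (innerPart σ a) fun x => (x - a) * (a + 1 - x) := by
  rw [moment_eq_pairing, moment_eq_pairing, pairing_add_left, pairing_extremeDelta]
  congr 1
  exact pairing_congr fun x _ => by ring

lemma spread_add_extremeDelta : spread (σ + extremeDelta σ a) = spread σ +
    ((pairing (innerPart σ a) fun x => a + 1 - x) * (pairing (innerPart σ a) fun x => x - a) -
      spread (innerPart σ a)) := by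
  have hσ : σ = outerPart σ a + innerPart σ a :=
    (add_comm _ _).trans (Finsupp.filter_add_filter_not σ _) |>.symm
  have hP : endpointMasses σ a = innerPart σ a + (extremeMove σ a).δ := by
    simp only [extremeMove, extremeDelta]
    abel
  have hcross : crossSpread (outerPart σ a) (endpointMasses σ a) =
      crossSpread (outerPart σ a) (innerPart σ a) := by
    rw [hP, crossSpread_add_right,
      (extremeMove σ a).crossSpread_eq_zero fun x hx => notMem_Icc_of_mem_support_outerPart σ a hx,
      add_zero]
  have hend : spread (endpointMasses σ a) =
      (pairing (innerPart σ a) fun x => a + 1 - x) * (pairing (innerPart σ a) fun x => x - a) := by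
    rw [endpointMasses, spread_add, spread_single, spread_single, crossSpread_single_single,
      show |a - (a + 1)| = 1 by norm_num]
    ring
  have hspread : spread σ = spread (outerPart σ a) + crossSpread (outerPart σ a) (innerPart σ a) +
      spread (innerPart σ a) := by
    conv_lhs => rw [hσ]
    exact spread_add _ _
  rw [add_extremeDelta, spread_add, hcross, hend, hspread]
  ring

end ExtremeMove

lemma spread_add_three_mul_sq_le_spread_add_extremeDelta :
    spread σ + 3 * (pairing (innerPart σ a) fun x => (x - a) * (a + 1 - x)) ^ 2 ≤
      spread (σ + extremeDelta σ a) := by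
  rw [spread_add_extremeDelta]
  linarith [spread_add_three_mul_sq_le fun x hx => mem_Icc_of_mem_support_innerPart σ a hx]

lemma ConvexOrderLE.add_move (h : ConvexOrderLE μ σ) (w : Move) (hμw : ∀ x, 0 ≤ (μ + w.δ) x) :
    ConvexOrderLE (μ + w.δ) (σ + extremeDelta σ w.a) := fun f hf => by
  have hchord : ∀ x ∈ Icc w.a (w.a + 1),
      chord f w.a x = (f (w.a + 1) - f w.a) * x + (f w.a - (f (w.a + 1) - f w.a) * w.a) :=
    fun x hx => by rw [hf.chord_eq_of_mem_Icc hx]; ring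
  -- Both moves act on `[w.a, w.a + 1]`, where the chord is affine, and `σ + extremeDelta σ w.a`
  -- has no mass strictly inside, where the chord differs from `f`.
  calc pairing (μ + w.δ) f ≤ pairing (μ + w.δ) (chord f w.a) := pairing_mono hμw (le_chord f w.a)
    _ = pairing μ (chord f w.a) := by
      rw [pairing_add_left, w.pairing_eq_zero_of_affine _ _ hchord, add_zero]
    _ ≤ pairing σ (chord f w.a) := h _ (hf.convexOn_chord w.a)
    _ = pairing (σ + extremeDelta σ w.a) (chord f w.a) := by
      rw [pairing_add_left, show pairing (extremeDelta σ w.a) (chord f w.a) = 0 from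
        (extremeMove σ w.a).pairing_eq_zero_of_affine _ _ hchord, add_zero]
    _ = pairing (σ + extremeDelta σ w.a) f := pairing_congr fun x hx =>
      hf.chord_eq_of_notMem_Ioo fun hI =>
        Finsupp.mem_support_iff.1 hx (add_extremeDelta_apply_of_mem_Ioo σ w.a hI)

lemma sq_add_le_of_sq_le {k M Δ S S' : ℝ} (hk : 0 ≤ k) (hS : 0 ≤ S) (hM : M ^ 2 ≤ k * S / 3)
    (hS' : S + 3 * Δ ^ 2 ≤ S') : (M + Δ) ^ 2 ≤ (k + 1) * S' / 3 := by
  rcases hk.eq_or_lt with rfl | hk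
  · nlinarith [sq_nonneg M]
  · refine le_of_mul_le_mul_left ?_ hk
    nlinarith [sq_nonneg (M - k * Δ), mul_le_mul_of_nonneg_left hM (by linarith : 0 ≤ k + 1),
      mul_le_mul_of_nonneg_left hS' (by positivity : 0 ≤ k * (k + 1))]

noncomputable def extremeSeq (v : ℕ → Move) : ℕ → ℝ →₀ ℝ
  | 0 => Finsupp.single 0 1
  | k + 1 => extremeSeq v k + extremeDelta (extremeSeq v k) (v k).a

section ExtremeSeq

variable (v : ℕ → Move)

lemma extremeSeq_nonneg : ∀ k x, 0 ≤ extremeSeq v k x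
  | 0, x => by
    rw [extremeSeq, Finsupp.single_apply]
    split_ifs <;> norm_num
  | k + 1, x => add_extremeDelta_nonneg _ _ (extremeSeq_nonneg k) x

lemma moment_zero_extremeSeq : ∀ k, moment 0 (extremeSeq v k) = 1
  | 0 => by rw [extremeSeq, moment_eq_pairing, pairing_single, pow_zero, mul_one]
  | k + 1 => by
    rw [extremeSeq, moment_eq_pairing, pairing_add_left, ← moment_eq_pairing,
      ← moment_eq_pairing, moment_zero_extremeSeq k, moment_zero_extremeDelta, add_zero]

lemma sq_moment_two_extremeSeq_le : ∀ k : ℕ,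
    moment 2 (extremeSeq v k) ^ 2 ≤ k * spread (extremeSeq v k) / 3
  | 0 => by simp [extremeSeq, moment]
  | k + 1 => by
    rw [extremeSeq, moment_two_add_extremeDelta, Nat.cast_succ]
    exact sq_add_le_of_sq_le k.cast_nonneg (spread_nonneg (extremeSeq_nonneg v k))
      (sq_moment_two_extremeSeq_le k) spread_add_three_mul_sq_le_spread_add_extremeDelta

end ExtremeSeq

lemma IsMoveSeq.convexOrderLE_extremeSeq {ℓ : ℕ} {v : ℕ → Move} {μ : ℕ → ℝ →₀ ℝ}
    (hseq : IsMoveSeq ℓ v μ) (h0 : μ 0 = Finsupp.single 0 1) :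
    ∀ k ≤ ℓ, ConvexOrderLE (μ k) (extremeSeq v k) := by
  intro k hk
  induction k with
  | zero => exact h0 ▸ fun f _ => le_rfl
  | succ k ih =>
    have hnext := hseq.2 k hk
    have hnonneg := (hseq.1 (k + 1) hk).1
    rw [hnext] at hnonneg ⊢
    exact (ih (by omega)).add_move (v k) hnonneg

lemma mul_cube_le_sq {M S L : ℝ} (hM : 0 ≤ M) (h1 : M ^ 2 ≤ L * S / 3)
    (h2 : S ^ 2 ≤ M / 3) : 27 * M ^ 3 ≤ L ^ 2 := by
  rcases hM.eq_or_lt with rfl | hM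
  · simpa using sq_nonneg L
  have h3 : (M ^ 2) ^ 2 ≤ (L * S / 3) ^ 2 := pow_le_pow_left₀ (sq_nonneg M) h1 2
  have h4 : L ^ 2 * S ^ 2 ≤ L ^ 2 * (M / 3) := mul_le_mul_of_nonneg_left h2 (sq_nonneg L)
  refine le_of_mul_le_mul_right ?_ hM
  nlinarith

lemma rpow_three_halves_mul_cube_le {p d L : ℝ} (hp : 0 ≤ p) (hd : 0 ≤ d) (hL : 0 ≤ L)
    (h : 27 * (p * d ^ 2) ^ 3 ≤ L ^ 2) : (3 * p) ^ ((3 : ℝ) / 2) * d ^ 3 ≤ L := by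
  have h3p : 0 ≤ 3 * p := by positivity
  rw [← pow_le_pow_iff_left₀ (by positivity) hL two_ne_zero, mul_pow, ← Real.rpow_natCast,
    ← Real.rpow_mul h3p, show (3 : ℝ) / 2 * (2 : ℕ) = (3 : ℕ) by norm_num, Real.rpow_natCast]
  nlinarith

theorem moves_from_point_mass_general (d p : ℝ) (hd : 0 < d) (hp0 : 0 < p)
    (ℓ : ℕ) (v : ℕ → Move) (μ : ℕ → ℝ →₀ ℝ) (hseq : IsMoveSeq ℓ v μ)
    (h0 : μ 0 = Finsupp.single 0 1)
    (hfin : p ≤ mass (μ ℓ) {t | d ≤ |t|}) :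
    (3 * p) ^ ((3 : ℝ) / 2) * d ^ 3 ≤ (ℓ : ℝ) := by
  set σ := extremeSeq v ℓ
  have hσ := extremeSeq_nonneg v ℓ
  have hM : p * d ^ 2 ≤ moment 2 σ := calc
    p * d ^ 2 ≤ mass (μ ℓ) {t | d ≤ |t|} * d ^ 2 := mul_le_mul_of_nonneg_right hfin (sq_nonneg d)
    _ ≤ moment 2 (μ ℓ) := mass_mul_sq_le_moment_two (hseq.1 ℓ le_rfl).1 hd.le
    _ ≤ moment 2 σ := hseq.convexOrderLE_extremeSeq h0 ℓ le_rfl _ (Even.convexOn_pow even_two)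
  have hspread := sq_spread_le hσ
  rw [moment_zero_extremeSeq, one_pow, one_mul] at hspread
  refine rpow_three_halves_mul_cube_le hp0.le hd.le ℓ.cast_nonneg ?_
  calc 27 * (p * d ^ 2) ^ 3 ≤ 27 * moment 2 σ ^ 3 := by gcongr
    _ ≤ (ℓ : ℝ) ^ 2 := mul_cube_le_sq ((by positivity : 0 ≤ p * d ^ 2).trans hM)
      (sq_moment_two_extremeSeq_le v ℓ) hspread

/-- **Lemma.** Any sequence of moves transforming `μ = {(0,1)}` into a
distribution `ν` with `ν{|x| ≥ d} ≥ p`, where `d > 0` and `0 < p < 1`, contains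
at least `(3p)^(3/2) d³` moves. -/
theorem moves_from_point_mass (d p : ℝ) (hd : 0 < d) (hp0 : 0 < p) (hp1 : p < 1)
    (ℓ : ℕ) (v : ℕ → Move) (μ : ℕ → ℝ →₀ ℝ) (hseq : IsMoveSeq ℓ v μ)
    (h0 : μ 0 = Finsupp.single 0 1)
    (hfin : p ≤ mass (μ ℓ) {t | d ≤ |t|}) :
    (3 * p) ^ ((3 : ℝ) / 2) * d ^ 3 ≤ (ℓ : ℝ) :=
  moves_from_point_mass_general d p hd hp0 ℓ v μ hseq h0 hfin
end
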